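/- Let H be a triangular Hopf algebra with R-matrix R, F a twisting cocycle, and g an H-Lie algebra with bracket [·,·]. Define the twisted bracket [ξ,η]' := Σ [F₁•ξ, F₂•η] and R̃ := F₂₁⁻¹·R·F = Σ R̃₁⊗R̃₂. Then [·,·]' satisfies the braided Jacobi identity with respect to R̃, namely [ξ,[η,ζ]']' = [[ξ,η]',ζ]' + Σ [R̃₂•η,[R̃₁•ξ,ζ]']', and the braided antisymmetry Σ [R̃₂•ξ, R̃₁•η]' = −[η,ξ]', for all ξ,η,ζ ∈ g. -/

import Mathlib

open TensorProduct

noncomputable section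

variable (k : Type*) [Field k] (H : Type*) [Ring H] [HopfAlgebra k H]

/-- The comultiplication of `H` as a linear map. -/
noncomputable def comulL : H →ₗ[k] H ⊗[k] H := Coalgebra.comul

/-- The counit of `H` as a linear map. -/
noncomputable def counitL : H →ₗ[k] k := Coalgebra.counit

/-- The antipode of `H`. -/
noncomputable def anti : H →ₗ[k] H := HopfAlgebra.antipode (R := k)

/-- `F` together with its inverse `Finv` is a twisting (Drinfeld) cocycle:
`F` is invertible, `(Δ⊗id)(F)·(F⊗1) = (id⊗Δ)(F)·(1⊗F)` and `(ε⊗id)(F) = 1 = (id⊗ε)(F)`. -/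
def IsCocycle (F Finv : H ⊗[k] H) : Prop :=
  F * Finv = 1 ∧ Finv * F = 1 ∧
  (TensorProduct.assoc k H H H) ((TensorProduct.map (comulL k H) LinearMap.id F) * (F ⊗ₜ 1))
    = (TensorProduct.map LinearMap.id (comulL k H) F) * ((1 : H) ⊗ₜ F) ∧
  (TensorProduct.lid k H) (TensorProduct.map (counitL k H) LinearMap.id F) = 1 ∧
  (TensorProduct.rid k H) (TensorProduct.map LinearMap.id (counitL k H) F) = 1

/-- `ϑ = Σ γ(F₁)F₂`. -/
noncomputable def theta (F : H ⊗[k] H) : H :=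
  LinearMap.mul' k H (TensorProduct.map (anti k H) LinearMap.id F)

/-- `ζ = Σ F̄₂ γ⁻¹(F̄₁)`, where `γinv` is the inverse of the antipode and `Finv = Σ F̄₁⊗F̄₂`. -/
noncomputable def zeta (γinv : H →ₗ[k] H) (Finv : H ⊗[k] H) : H :=
  LinearMap.mul' k H (TensorProduct.map LinearMap.id γinv ((TensorProduct.comm k H H) Finv))

/-- `R` (with inverse `Rinv`) is a triangular structure: `R` is invertible,
`R Δ(h) = Δᵒᵖ(h) R`, the two hexagon identities `(Δ⊗id)(R) = R₁₃R₂₃`,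
`(id⊗Δ)(R) = R₁₃R₁₂` hold, and `R₂₁ R = 1`. -/
def IsTriangular (R Rinv : H ⊗[k] H) : Prop :=
  R * Rinv = 1 ∧ Rinv * R = 1 ∧
  (∀ h : H, R * comulL k H h = (TensorProduct.comm k H H) (comulL k H h) * R) ∧
  (TensorProduct.assoc k H H H) (TensorProduct.map (comulL k H) LinearMap.id R)
    = (TensorProduct.map LinearMap.id (TensorProduct.mk k H H 1) R) * ((1 : H) ⊗ₜ R) ∧
  (TensorProduct.map LinearMap.id (comulL k H) R)
    = (TensorProduct.map LinearMap.id (TensorProduct.mk k H H 1) R) *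
      ((TensorProduct.assoc k H H H) (R ⊗ₜ (1 : H))) ∧
  ((TensorProduct.comm k H H) R) * R = 1

/-- `bcomp U V x y = (U x) ∘ₗ (V y)`, bilinearly in `x, y`. -/
noncomputable def bcomp {A B C : Type*} [AddCommMonoid A] [AddCommMonoid B] [AddCommMonoid C]
    [Module k A] [Module k B] [Module k C]
    (U : H →ₗ[k] B →ₗ[k] C) (V : H →ₗ[k] A →ₗ[k] B) : H →ₗ[k] H →ₗ[k] (A →ₗ[k] C) :=
  ((((LinearMap.llcomp k A B C) ∘ₗ U).flip) ∘ₗ V).flip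

/-- Given an action `α` of `H` on `M`, the induced action of `H ⊗ H` on `M ⊗ M`:
`pairAct α (x ⊗ y) (a ⊗ b) = (α x a) ⊗ (α y b)`. -/
noncomputable def pairAct {M : Type*} [AddCommMonoid M] [Module k M]
    (α : H →ₗ[k] M →ₗ[k] M) : H ⊗[k] H →ₗ[k] (M ⊗[k] M →ₗ[k] M ⊗[k] M) :=
  (TensorProduct.homTensorHomMap (RingHom.id k) M M M M) ∘ₗ (TensorProduct.map α α)

/-- `sandwich α β (x ⊗ y) a = α x * a * β y`. -/
noncomputable def sandwich {E : Type*} [Ring E] [Algebra k E]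
    (α β : H →ₗ[k] E) : H ⊗[k] H →ₗ[k] E →ₗ[k] E :=
  TensorProduct.lift (bcomp k H ((LinearMap.mul k E) ∘ₗ α) ((LinearMap.mul k E).flip ∘ₗ β))

/-- The adjoint action associated with `ρ : H →ₗ E`:
`adAct ρ h a = Σ ρ(h⁽¹⁾) a ρ(γ(h⁽²⁾))`. -/
noncomputable def adAct {E : Type*} [Ring E] [Algebra k E]
    (ρ : H →ₗ[k] E) : H →ₗ[k] E →ₗ[k] E :=
  (sandwich k H ρ (ρ ∘ₗ anti k H)) ∘ₗ comulL k H

/-- The twisted comultiplication `Δ̃(h) = F⁻¹ Δ(h) F`. -/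
noncomputable def comulTw (F Finv : H ⊗[k] H) : H →ₗ[k] H ⊗[k] H :=
  (LinearMap.mulRight k F) ∘ₗ (LinearMap.mulLeft k Finv) ∘ₗ comulL k H

/-- The twisted antipode `γ̃(h) = ϑ⁻¹ γ(h) ϑ`. -/
noncomputable def antiTw (ϑ ϑinv : H) : H →ₗ[k] H :=
  (LinearMap.mulRight k ϑ) ∘ₗ (LinearMap.mulLeft k ϑinv) ∘ₗ anti k H

variable (A : Type*) [Ring A] [Algebra k A]

/-- `act` makes `A` a left `H`-module algebra:
`act` is a representation of `H`, `h•(ab) = Σ (h⁽¹⁾•a)(h⁽²⁾•b)` and `h•1 = ε(h)1`. -/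
def IsModAlg (act : H →ₗ[k] Module.End k A) : Prop :=
  act 1 = 1 ∧ (∀ g h : H, act (g * h) = act g * act h) ∧
  (∀ (h : H) (a b : A),
    act h (a * b) = LinearMap.mul' k A ((pairAct k H act) (comulL k H h) (a ⊗ₜ b))) ∧
  (∀ h : H, act h 1 = (counitL k H h) • (1 : A))

/-- The adjoint-type action of `H` on `End_k(A)`: `h.X = Σ ρ(h⁽¹⁾) ∘ X ∘ ρ(γ(h⁽²⁾))`. -/
noncomputable def dotAct (act : H →ₗ[k] Module.End k A) :
    H →ₗ[k] Module.End k A →ₗ[k] Module.End k A :=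
  (sandwich k H (E := Module.End k A) act (act ∘ₗ anti k H)) ∘ₗ comulL k H

/-!
Everything is transported through the action of `H ⊗ H` on `g ⊗ g`, and of `H^{⊗3}` on
`g^{⊗3}`. By equivariance of the bracket, the twisted nested brackets `[ξ,[η,ζ]']'` and
`[[ξ,η]',ζ]'` are the untwisted ones precomposed with the action of `(id⊗Δ)(F)(1⊗F)` and
`(Δ⊗id)(F)(F⊗1)`, which agree by the cocycle identity. The braided term is carried along by
`R₁₂ (Δ⊗id)(F)(F⊗1) = (Δᵒᵖ⊗id)(F)(F₂₁⊗1) R̃₁₂`, a consequence of `RΔ = ΔᵒᵖR`, so the braided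
Jacobi identity for `[·,·]` evaluated at `(Δ⊗id)(F)(F⊗1)•(ξ⊗η⊗ζ)` is the one for `[·,·]'`.
Antisymmetry follows in the same way from `F R̃₂₁ = R₂₁ F₂₁`.
-/

section TensorRep

variable {R : Type*} [CommSemiring R]
  {A₁ A₂ A₃ A₁' A₂' : Type*} [Semiring A₁] [Algebra R A₁] [Semiring A₂] [Algebra R A₂]
  [Semiring A₃] [Algebra R A₃] [Semiring A₁'] [Algebra R A₁'] [Semiring A₂'] [Algebra R A₂']
  {M₁ M₂ M₃ M₁' M₂' : Type*} [AddCommMonoid M₁] [Module R M₁] [AddCommMonoid M₂] [Module R M₂]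
  [AddCommMonoid M₃] [Module R M₃] [AddCommMonoid M₁'] [Module R M₁']
  [AddCommMonoid M₂'] [Module R M₂']

def tensorRep (ρ₁ : A₁ →ₐ[R] Module.End R M₁) (ρ₂ : A₂ →ₐ[R] Module.End R M₂) :
    A₁ ⊗[R] A₂ →ₐ[R] Module.End R (M₁ ⊗[R] M₂) :=
  Module.endTensorEndAlgHom.comp (Algebra.TensorProduct.map ρ₁ ρ₂)

variable (ρ₁ : A₁ →ₐ[R] Module.End R M₁) (ρ₂ : A₂ →ₐ[R] Module.End R M₂)
  (ρ₃ : A₃ →ₐ[R] Module.End R M₃)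

@[simp]
lemma tensorRep_tmul (a₁ : A₁) (a₂ : A₂) :
    tensorRep ρ₁ ρ₂ (a₁ ⊗ₜ a₂) = TensorProduct.map (ρ₁ a₁) (ρ₂ a₂) :=
  rfl

lemma map_comp_tensorRep_map (ρ₁' : A₁' →ₐ[R] Module.End R M₁')
    (ρ₂' : A₂' →ₐ[R] Module.End R M₂') {φ₁ : A₁' →ₗ[R] A₁} {φ₂ : A₂' →ₗ[R] A₂}
    {f₁ : M₁ →ₗ[R] M₁'} {f₂ : M₂ →ₗ[R] M₂'}
    (h₁ : ∀ a, f₁ ∘ₗ ρ₁ (φ₁ a) = ρ₁' a ∘ₗ f₁) (h₂ : ∀ a, f₂ ∘ₗ ρ₂ (φ₂ a) = ρ₂' a ∘ₗ f₂)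
    (X : A₁' ⊗[R] A₂') :
    map f₁ f₂ ∘ₗ tensorRep ρ₁ ρ₂ (map φ₁ φ₂ X) = tensorRep ρ₁' ρ₂' X ∘ₗ map f₁ f₂ := by
  induction X using TensorProduct.induction_on with
  | zero => simp
  | tmul a₁ a₂ => simp only [map_tmul, tensorRep_tmul, ← map_comp, h₁, h₂]
  | add X Y hX hY => simp only [map_add, LinearMap.comp_add, LinearMap.add_comp, hX, hY]

lemma comm_comp_tensorRep (X : A₁ ⊗[R] A₂) :
    (TensorProduct.comm R M₁ M₂).toLinearMap ∘ₗ tensorRep ρ₁ ρ₂ X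
      = tensorRep ρ₂ ρ₁ (TensorProduct.comm R A₁ A₂ X)
        ∘ₗ (TensorProduct.comm R M₁ M₂).toLinearMap := by
  induction X using TensorProduct.induction_on with
  | zero => simp
  | tmul a₁ a₂ => ext; simp
  | add X Y hX hY => simp only [map_add, LinearMap.comp_add, LinearMap.add_comp, hX, hY]

lemma tensorRep_assoc_comp (X : (A₁ ⊗[R] A₂) ⊗[R] A₃) :
    tensorRep ρ₁ (tensorRep ρ₂ ρ₃) (TensorProduct.assoc R A₁ A₂ A₃ X)
        ∘ₗ (TensorProduct.assoc R M₁ M₂ M₃).toLinearMap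
      = (TensorProduct.assoc R M₁ M₂ M₃).toLinearMap ∘ₗ tensorRep (tensorRep ρ₁ ρ₂) ρ₃ X := by
  induction X using TensorProduct.induction_on with
  | zero => simp
  | tmul Y a₃ =>
    induction Y using TensorProduct.induction_on with
    | zero => simp
    | tmul a₁ a₂ => ext; simp
    | add Y Z hY hZ =>
      simp only [add_tmul, map_add, LinearMap.comp_add, LinearMap.add_comp, hY, hZ]
  | add X Y hX hY => simp only [map_add, LinearMap.comp_add, LinearMap.add_comp, hX, hY]

end TensorRep

section RMatrix

variable {R B : Type*} [CommSemiring R] [Semiring B] [Algebra R B]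
  {Δ : B →ₗ[R] B ⊗[R] B} {r F Finv : B ⊗[R] B}

lemma rTensor_comm_mul (X Y : (B ⊗[R] B) ⊗[R] B) :
    (TensorProduct.comm R B B).toLinearMap.rTensor B (X * Y)
      = (TensorProduct.comm R B B).toLinearMap.rTensor B X
        * (TensorProduct.comm R B B).toLinearMap.rTensor B Y :=
  map_mul (Algebra.TensorProduct.map (Algebra.TensorProduct.comm R B B).toAlgHom (AlgHom.id R B))
    X Y

lemma TensorProduct.comm_mul (X Y : B ⊗[R] B) :
    TensorProduct.comm R B B (X * Y) = TensorProduct.comm R B B X * TensorProduct.comm R B B Y :=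
  map_mul (Algebra.TensorProduct.comm R B B) X Y

lemma tmul_one_mul_rTensor (hr : ∀ h, r * Δ h = TensorProduct.comm R B B (Δ h) * r)
    (X : B ⊗[R] B) :
    (r ⊗ₜ 1) * Δ.rTensor B X
      = (TensorProduct.comm R B B).toLinearMap.rTensor B (Δ.rTensor B X) * (r ⊗ₜ 1) := by
  induction X using TensorProduct.induction_on with
  | zero => simp
  | tmul h b => simp [Algebra.TensorProduct.tmul_mul_tmul, hr]
  | add X Y hX hY => simp only [map_add, mul_add, add_mul, hX, hY]

lemma tmul_one_mul_cocycle (hr : ∀ h, r * Δ h = TensorProduct.comm R B B (Δ h) * r)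
    (hF : F * Finv = 1) :
    (r ⊗ₜ 1) * (Δ.rTensor B F * (F ⊗ₜ 1))
      = (TensorProduct.comm R B B).toLinearMap.rTensor B (Δ.rTensor B F * (F ⊗ₜ 1))
        * ((TensorProduct.comm R B B Finv * r * F) ⊗ₜ 1) := by
  have hcomm : TensorProduct.comm R B B F * TensorProduct.comm R B B Finv = 1 := by
    rw [← TensorProduct.comm_mul, hF, Algebra.TensorProduct.one_def, comm_tmul,
      ← Algebra.TensorProduct.one_def]
  rw [← mul_assoc, tmul_one_mul_rTensor hr, rTensor_comm_mul, mul_assoc, mul_assoc]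
  congr 1
  simp only [LinearMap.rTensor_tmul, LinearEquiv.coe_coe, Algebra.TensorProduct.tmul_mul_tmul,
    mul_one, ← mul_assoc, hcomm, one_mul]

end RMatrix

section Twisting

variable {R B M : Type*} [CommSemiring R] [Semiring B] [Algebra R B]
  [AddCommMonoid M] [Module R M] {ρ : B →ₐ[R] Module.End R M}
  {Δ : B →ₗ[R] B ⊗[R] B} {br : M ⊗[R] M →ₗ[R] M}

lemma lTensor_tensorRep (X : B ⊗[R] B) :
    (tensorRep ρ ρ X).lTensor M = tensorRep ρ (tensorRep ρ ρ) (1 ⊗ₜ X) := by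
  rw [tensorRep_tmul, map_one]; rfl

lemma rTensor_tensorRep (X : B ⊗[R] B) :
    (tensorRep ρ ρ X).rTensor M = tensorRep (tensorRep ρ ρ) ρ (X ⊗ₜ 1) := by
  rw [tensorRep_tmul, map_one]; rfl

lemma tensorRep_comp_lTensor (hbr : ∀ h, br ∘ₗ tensorRep ρ ρ (Δ h) = ρ h ∘ₗ br)
    (X : B ⊗[R] B) :
    tensorRep ρ ρ X ∘ₗ br.lTensor M = br.lTensor M ∘ₗ tensorRep ρ (tensorRep ρ ρ) (Δ.lTensor B X) :=
  (map_comp_tensorRep_map _ _ _ _ (fun _ ↦ rfl) hbr X).symm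

lemma tensorRep_comp_rTensor (hbr : ∀ h, br ∘ₗ tensorRep ρ ρ (Δ h) = ρ h ∘ₗ br)
    (X : B ⊗[R] B) :
    tensorRep ρ ρ X ∘ₗ br.rTensor M = br.rTensor M ∘ₗ tensorRep (tensorRep ρ ρ) ρ (Δ.rTensor B X) :=
  (map_comp_tensorRep_map _ _ _ _ hbr (fun _ ↦ rfl) X).symm

lemma twist_comp_rTensor_twist (hbr : ∀ h, br ∘ₗ tensorRep ρ ρ (Δ h) = ρ h ∘ₗ br)
    (F : B ⊗[R] B) :
    (br ∘ₗ tensorRep ρ ρ F) ∘ₗ (br ∘ₗ tensorRep ρ ρ F).rTensor M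
      = (br ∘ₗ br.rTensor M) ∘ₗ tensorRep (tensorRep ρ ρ) ρ (Δ.rTensor B F * (F ⊗ₜ 1)) := by
  simp only [LinearMap.rTensor_comp, rTensor_tensorRep, LinearMap.comp_assoc]
  rw [← LinearMap.comp_assoc _ _ (tensorRep ρ ρ F), tensorRep_comp_rTensor hbr,
    LinearMap.comp_assoc, ← Module.End.mul_eq_comp, ← map_mul]

lemma twist_comp_lTensor_twist_comp_assoc (hbr : ∀ h, br ∘ₗ tensorRep ρ ρ (Δ h) = ρ h ∘ₗ br)
    (F : B ⊗[R] B)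
    (hF : TensorProduct.assoc R B B B (Δ.rTensor B F * (F ⊗ₜ 1)) = Δ.lTensor B F * (1 ⊗ₜ F)) :
    (br ∘ₗ tensorRep ρ ρ F) ∘ₗ (br ∘ₗ tensorRep ρ ρ F).lTensor M
        ∘ₗ (TensorProduct.assoc R M M M).toLinearMap
      = (br ∘ₗ br.lTensor M ∘ₗ (TensorProduct.assoc R M M M).toLinearMap)
        ∘ₗ tensorRep (tensorRep ρ ρ) ρ (Δ.rTensor B F * (F ⊗ₜ 1)) := by
  simp only [LinearMap.lTensor_comp, lTensor_tensorRep, LinearMap.comp_assoc]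
  rw [← LinearMap.comp_assoc _ _ (tensorRep ρ ρ F), tensorRep_comp_lTensor hbr,
    LinearMap.comp_assoc, ← LinearMap.comp_assoc _ _ (tensorRep ρ (tensorRep ρ ρ) _),
    ← Module.End.mul_eq_comp, ← map_mul, ← hF, tensorRep_assoc_comp]

end Twisting

section BraidedLie

variable {R B M : Type*} [CommSemiring R] [Semiring B] [Algebra R B]

/-- `[ξ,[η,ζ]] = [[ξ,η],ζ] + Σ [r₂•η,[r₁•ξ,ζ]]`, as an identity of maps on `(M ⊗ M) ⊗ M`. -/
def IsBraidedJacobi [AddCommMonoid M] [Module R M] (ρ : B →ₐ[R] Module.End R M)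
    (r : B ⊗[R] B) (br : M ⊗[R] M →ₗ[R] M) : Prop :=
  br ∘ₗ br.lTensor M ∘ₗ (TensorProduct.assoc R M M M).toLinearMap
    = br ∘ₗ br.rTensor M
      + (br ∘ₗ br.lTensor M ∘ₗ (TensorProduct.assoc R M M M).toLinearMap)
        ∘ₗ (TensorProduct.comm R M M).toLinearMap.rTensor M ∘ₗ tensorRep (tensorRep ρ ρ) ρ (r ⊗ₜ 1)

def IsBraidedAntisymm [AddCommGroup M] [Module R M] (ρ : B →ₐ[R] Module.End R M)
    (r : B ⊗[R] B) (br : M ⊗[R] M →ₗ[R] M) : Prop :=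
  br ∘ₗ tensorRep ρ ρ (TensorProduct.comm R B B r)
    = -(br ∘ₗ (TensorProduct.comm R M M).toLinearMap)

section Jacobi

variable [AddCommMonoid M] [Module R M] {ρ : B →ₐ[R] Module.End R M} {r : B ⊗[R] B}
  {br : M ⊗[R] M →ₗ[R] M}

lemma lTensor_assoc_tmul (v : M ⊗[R] M) (ζ : M) :
    br.lTensor M (TensorProduct.assoc R M M M (v ⊗ₜ ζ))
      = TensorProduct.map LinearMap.id (((TensorProduct.mk R M M).compr₂ br).flip ζ) v := by
  induction v using TensorProduct.induction_on with
  | zero => simp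
  | tmul ξ η => simp
  | add v w hv hw => simp only [add_tmul, map_add, hv, hw]

lemma isBraidedJacobi_iff : IsBraidedJacobi ρ r br ↔ ∀ ξ η ζ : M,
    br (ξ ⊗ₜ br (η ⊗ₜ ζ)) = br (br (ξ ⊗ₜ η) ⊗ₜ ζ)
      + br (TensorProduct.map LinearMap.id (((TensorProduct.mk R M M).compr₂ br).flip ζ)
          (tensorRep ρ ρ (TensorProduct.comm R B B r) (η ⊗ₜ ξ))) := by
  have hswap (ξ η : M) : TensorProduct.comm R M M (tensorRep ρ ρ r (ξ ⊗ₜ η))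
      = tensorRep ρ ρ (TensorProduct.comm R B B r) (η ⊗ₜ ξ) :=
    LinearMap.congr_fun (comm_comp_tensorRep ρ ρ r) (ξ ⊗ₜ η)
  constructor
  · intro h ξ η ζ
    simpa [hswap, lTensor_assoc_tmul] using LinearMap.congr_fun h ((ξ ⊗ₜ η) ⊗ₜ ζ)
  · intro h
    refine TensorProduct.ext_threefold fun ξ η ζ ↦ ?_
    simpa [hswap, lTensor_assoc_tmul] using h ξ η ζ

variable {Δ : B →ₗ[R] B ⊗[R] B} {F Finv : B ⊗[R] B}

lemma rTensor_comm_comp_tensorRep (Z : (B ⊗[R] B) ⊗[R] B) :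
    (TensorProduct.comm R M M).toLinearMap.rTensor M
        ∘ₗ tensorRep (tensorRep ρ ρ) ρ ((TensorProduct.comm R B B).toLinearMap.rTensor B Z)
      = tensorRep (tensorRep ρ ρ) ρ Z ∘ₗ (TensorProduct.comm R M M).toLinearMap.rTensor M :=
  map_comp_tensorRep_map _ _ _ _
    (fun X ↦ by simpa using comm_comp_tensorRep ρ ρ (TensorProduct.comm R B B X))
    (fun _ ↦ rfl) Z

theorem IsBraidedJacobi.twist (hbr : ∀ h, br ∘ₗ tensorRep ρ ρ (Δ h) = ρ h ∘ₗ br)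
    (hr : ∀ h, r * Δ h = TensorProduct.comm R B B (Δ h) * r) (hF : F * Finv = 1)
    (hcocycle :
      TensorProduct.assoc R B B B (Δ.rTensor B F * (F ⊗ₜ 1)) = Δ.lTensor B F * (1 ⊗ₜ F))
    (h : IsBraidedJacobi ρ r br) :
    IsBraidedJacobi ρ (TensorProduct.comm R B B Finv * r * F) (br ∘ₗ tensorRep ρ ρ F) := by
  have hΦ : (TensorProduct.comm R M M).toLinearMap.rTensor M
        ∘ₗ tensorRep (tensorRep ρ ρ) ρ (r ⊗ₜ 1)
        ∘ₗ tensorRep (tensorRep ρ ρ) ρ (Δ.rTensor B F * (F ⊗ₜ 1))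
      = tensorRep (tensorRep ρ ρ) ρ (Δ.rTensor B F * (F ⊗ₜ 1))
        ∘ₗ (TensorProduct.comm R M M).toLinearMap.rTensor M
        ∘ₗ tensorRep (tensorRep ρ ρ) ρ ((TensorProduct.comm R B B Finv * r * F) ⊗ₜ 1) := by
    rw [← Module.End.mul_eq_comp (tensorRep _ _ _), ← map_mul, tmul_one_mul_cocycle hr hF, map_mul,
      Module.End.mul_eq_comp, ← LinearMap.comp_assoc, rTensor_comm_comp_tensorRep,
      LinearMap.comp_assoc]
  unfold IsBraidedJacobi at h ⊢
  rw [twist_comp_lTensor_twist_comp_assoc hbr F hcocycle, twist_comp_rTensor_twist hbr F]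
  conv_lhs => rw [h, LinearMap.add_comp]
  simp only [LinearMap.comp_assoc, hΦ]

end Jacobi

section Antisymm

variable [AddCommGroup M] [Module R M] {ρ : B →ₐ[R] Module.End R M} {r : B ⊗[R] B}
  {br : M ⊗[R] M →ₗ[R] M}

lemma isBraidedAntisymm_iff : IsBraidedAntisymm ρ r br ↔ ∀ ξ η : M,
    br (tensorRep ρ ρ (TensorProduct.comm R B B r) (ξ ⊗ₜ η)) = -br (η ⊗ₜ ξ) := by
  refine ⟨fun h ξ η ↦ by simpa using LinearMap.congr_fun h (ξ ⊗ₜ η),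
    fun h ↦ TensorProduct.ext' fun ξ η ↦ by simpa using h ξ η⟩

theorem IsBraidedAntisymm.twist {F Finv : B ⊗[R] B} (hF : F * Finv = 1)
    (h : IsBraidedAntisymm ρ r br) :
    IsBraidedAntisymm ρ (TensorProduct.comm R B B Finv * r * F) (br ∘ₗ tensorRep ρ ρ F) := by
  have hFr : F * TensorProduct.comm R B B (TensorProduct.comm R B B Finv * r * F)
      = TensorProduct.comm R B B r * TensorProduct.comm R B B F := by
    rw [TensorProduct.comm_mul, TensorProduct.comm_mul, comm_comm, ← mul_assoc, ← mul_assoc, hF,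
      one_mul]
  unfold IsBraidedAntisymm at h ⊢
  rw [LinearMap.comp_assoc, ← Module.End.mul_eq_comp, ← map_mul, hFr, map_mul,
    Module.End.mul_eq_comp, ← LinearMap.comp_assoc, h, LinearMap.neg_comp, LinearMap.comp_assoc,
    comm_comp_tensorRep, comm_comm, LinearMap.comp_assoc]

end Antisymm

end BraidedLie

lemma pairAct_eq_tensorRep {M : Type*} [AddCommMonoid M] [Module k M]
    (ρ : H →ₐ[k] Module.End k M) : pairAct k H ρ.toLinearMap = (tensorRep ρ ρ).toLinearMap :=
  TensorProduct.ext' fun _ _ ↦ rfl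

theorem twisted_bracket_is_HLie
    (R Rinv : H ⊗[k] H) (hR : IsTriangular k H R Rinv)
    (F Finv : H ⊗[k] H) (hF : IsCocycle k H F Finv)
    (g : Type*) [AddCommGroup g] [Module k g]
    (act : H →ₗ[k] Module.End k g)
    (hact1 : act 1 = 1) (hactmul : ∀ x y : H, act (x * y) = act x * act y)
    (br : g ⊗[k] g →ₗ[k] g)
    -- `H`-equivariance of the bracket
    (hequiv : ∀ (h : H) (ξ η : g),
      act h (br (ξ ⊗ₜ η)) = br ((pairAct k H act) (comulL k H h) (ξ ⊗ₜ η)))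
    -- braided Jacobi identity
    (hjac : ∀ ξ η ζ : g,
      br (ξ ⊗ₜ br (η ⊗ₜ ζ))
        = br (br (ξ ⊗ₜ η) ⊗ₜ ζ) +
          br ((TensorProduct.map LinearMap.id
                (((TensorProduct.mk k g g).compr₂ br).flip ζ))
            ((pairAct k H act) ((TensorProduct.comm k H H) R) (η ⊗ₜ ξ))))
    -- braided antisymmetry
    (hanti : ∀ ξ η : g,
      br ((pairAct k H act) ((TensorProduct.comm k H H) R) (ξ ⊗ₜ η)) = - br (η ⊗ₜ ξ)) :
    (∀ ξ η ζ : g,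
      (br ∘ₗ (pairAct k H act) F) (ξ ⊗ₜ (br ∘ₗ (pairAct k H act) F) (η ⊗ₜ ζ))
        = (br ∘ₗ (pairAct k H act) F) ((br ∘ₗ (pairAct k H act) F) (ξ ⊗ₜ η) ⊗ₜ ζ) +
          (br ∘ₗ (pairAct k H act) F)
            ((TensorProduct.map LinearMap.id
                (((TensorProduct.mk k g g).compr₂ (br ∘ₗ (pairAct k H act) F)).flip ζ))
              ((pairAct k H act)
                ((TensorProduct.comm k H H) (((TensorProduct.comm k H H) Finv) * R * F))
                (η ⊗ₜ ξ)))) ∧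
    (∀ ξ η : g,
      (br ∘ₗ (pairAct k H act) F)
          ((pairAct k H act)
            ((TensorProduct.comm k H H) (((TensorProduct.comm k H H) Finv) * R * F))
            (ξ ⊗ₜ η))
        = - (br ∘ₗ (pairAct k H act) F) (η ⊗ₜ ξ)) := by
  obtain ⟨hFFinv, -, hcocycle, -, -⟩ := hF
  set ρ : H →ₐ[k] Module.End k g := AlgHom.ofLinearMap act hact1 hactmul
  have hpair : pairAct k H act = (tensorRep ρ ρ).toLinearMap := pairAct_eq_tensorRep k H ρ
  simp only [hpair, AlgHom.toLinearMap_apply] at hequiv hjac hanti ⊢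
  have hbr (h : H) : br ∘ₗ tensorRep ρ ρ (comulL k H h) = ρ h ∘ₗ br :=
    (TensorProduct.ext' (hequiv h)).symm
  exact ⟨isBraidedJacobi_iff.1 ((isBraidedJacobi_iff.2 hjac).twist hbr hR.2.2.1 hFFinv hcocycle),
    isBraidedAntisymm_iff.1 ((isBraidedAntisymm_iff.2 hanti).twist hFFinv)⟩

end
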